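/- Let L be a Lagrangian of order r in m field components over an open set U ⊆ ℝⁿ. Then for every smooth field q : U → ℝᵐ and every smooth variation δq : U → ℝᵐ, as smooth functions on U: Σ_{k=0}^{r} (∂L/∂q^i_{,μ₁…μₖ})[q] · ∂_{μ₁}⋯∂_{μₖ} δq^i = (δL/δq^i)[q] · δq^i + ∂_μ( Σ_{k=0}^{r−1} P_i^{μμ₁…μₖ}[q] · ∂_{μ₁}⋯∂_{μₖ} δq^i ), where the Lagrangian momenta are P_i^{μ₁…μₖ} := Σ_{l=0}^{r−k} (−1)^l d_{ν₁}⋯d_{ν_l} ∂L/∂q^i_{,μ₁…μₖν₁…ν_l} for 0 ≤ k ≤ r. -/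

import Mathlib

/-! `P_κ = ∂L/∂q_κ − ∂_ν P_{νκ}` for `|κ| < r` and `P_κ = ∂L/∂q_κ` for `|κ| = r`; this recursion is
inherited from the alternating sums defining the momenta, once the symmetry of `∂L/∂q_κ` in `κ` is
used to move the extra index. Multiplying the recursion by `∂_κ δq` and applying the Leibniz rule,
each level `k` contributes `(∂L/∂q_κ − P_κ) ∂_κ δq + Σ_{|κ'| = k+1} P_{κ'} ∂_{κ'} δq`, so the sum
over the levels telescopes, leaving `P_∅ δq = (δL/δq) δq`. -/

open scoped BigOperators

noncomputable section

/-- Partial derivative of a function on `ℝⁿ` in the coordinate direction `μ`. -/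
def pd {n : ℕ} (μ : Fin n) (f : (Fin n → ℝ) → ℝ) : (Fin n → ℝ) → ℝ :=
  fun x => fderiv ℝ f x (Pi.single μ 1)

/-- Iterated partial derivatives `∂_{μ₁}⋯∂_{μₖ}` along a list of coordinate directions. -/
def pds {n : ℕ} : List (Fin n) → ((Fin n → ℝ) → ℝ) → (Fin n → ℝ) → ℝ
  | [], f => f
  | μ :: l, f => pd μ (pds l f)

/-- Index of a jet variable `q^i_{,μ₁…μₖ}` (`k ≤ r`). -/
abbrev JetIdx (n m r : ℕ) := Fin m × Σ k : Fin (r + 1), (Fin (k : ℕ) → Fin n)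

abbrev JetFiber (n m r : ℕ) := JetIdx n m r → ℝ

/-- The order-`r` jet space: base coordinates together with all jet variables. -/
abbrev JetSpace (n m r : ℕ) := (Fin n → ℝ) × JetFiber n m r

/-- The `r`-jet prolongation of a field `q`. -/
def jetOf {n m : ℕ} (r : ℕ) (q : (Fin n → ℝ) → Fin m → ℝ) (x : Fin n → ℝ) :
    JetSpace n m r :=
  (x, fun p => pds (List.ofFn p.2.2) (fun y => q y p.1) x)

/-- The symmetrized delta `δ^{(μ₁}_{ν₁}⋯δ^{μₖ)}_{νₖ}` (zero if arities differ). -/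
def symCoeff {n k k' : ℕ} (μ : Fin k → Fin n) (ν : Fin k' → Fin n) : ℝ :=
  ((Finset.univ.filter fun σ : Equiv.Perm (Fin k) =>
      List.ofFn (μ ∘ σ) = List.ofFn ν).card : ℝ) / (Nat.factorial k : ℝ)

def jetDir {n : ℕ} (m r : ℕ) (i : Fin m) {k : ℕ} (μ : Fin k → Fin n) : JetFiber n m r :=
  fun p => if p.1 = i then symCoeff μ p.2.2 else 0

/-- The symmetrized partial derivative `∂L/∂q^i_{,μ₁…μₖ}` of a jet function,
obeying `∂q^i_{,ν₁…νₖ}/∂q^j_{,μ₁…μ_l} = δ^l_k δ^i_j δ^{(μ₁}_{ν₁}⋯δ^{μₖ)}_{νₖ}`. -/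
def pdQ {n m r : ℕ} (L : JetSpace n m r → ℝ) (i : Fin m) {k : ℕ} (μ : Fin k → Fin n) :
    JetSpace n m r → ℝ :=
  fun z => fderiv ℝ L z ((0 : Fin n → ℝ), jetDir m r i μ)

/-- The partial derivative `∂L/∂x^μ` of a jet function w.r.t. a base coordinate. -/
def pdX {n m r : ℕ} (L : JetSpace n m r → ℝ) (μ : Fin n) : JetSpace n m r → ℝ :=
  fun z => fderiv ℝ L z ((Pi.single μ 1 : Fin n → ℝ), 0)

def idxCast {n m a b : ℕ} (h : a ≤ b) (p : JetIdx n m a) : JetIdx n m b :=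
  ⟨p.1, ⟨⟨(p.2.1 : ℕ), Nat.lt_of_lt_of_le p.2.1.isLt (Nat.succ_le_succ h)⟩, p.2.2⟩⟩

/-- Truncation of a higher-order jet to a lower order. -/
def trunc {n m a b : ℕ} (h : a ≤ b) (z : JetSpace n m b) : JetSpace n m a :=
  (z.1, fun p => z.2 (idxCast h p))

/-- Regard an order-`a` jet function as an order-`b` jet function (`a ≤ b`). -/
def liftJ {n m a b : ℕ} (h : a ≤ b) (F : JetSpace n m a → ℝ) : JetSpace n m b → ℝ :=
  fun z => F (trunc h z)

def idxExt {n m a : ℕ} (p : JetIdx n m a) (μ : Fin n) : JetIdx n m (a + 1) :=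
  ⟨p.1, ⟨⟨(p.2.1 : ℕ) + 1, Nat.succ_lt_succ p.2.1.isLt⟩, Fin.snoc p.2.2 μ⟩⟩

/-- The total derivative `d_μ` of a jet function. -/
def dTot {n m a : ℕ} (μ : Fin n) (F : JetSpace n m a → ℝ) : JetSpace n m (a + 1) → ℝ :=
  fun z => pdX F μ (trunc (Nat.le_succ a) z)
    + ∑ p : JetIdx n m a, pdQ F p.1 p.2.2 (trunc (Nat.le_succ a) z) * z.2 (idxExt p μ)

/-- Iterated total derivatives `d_{ν₁}⋯d_{νₖ}` of a jet function. -/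
def dTots {n m : ℕ} : (a k : ℕ) → (Fin k → Fin n) → (JetSpace n m a → ℝ) →
    JetSpace n m (a + k) → ℝ
  | _, 0, _, F => F
  | a, k + 1, ν, F => dTot (ν 0) (dTots a k (fun j => ν j.succ) F)

/-- The Euler–Lagrange expressions `δL/δq^i` of an order-`r` Lagrangian,
as a jet function of order `2r`. -/
def ELjet {n m r : ℕ} (L : JetSpace n m r → ℝ) (i : Fin m) : JetSpace n m (r + r) → ℝ :=
  fun z => ∑ k : Fin (r + 1), (-1 : ℝ) ^ (k : ℕ) *
    ∑ μ : Fin (k : ℕ) → Fin n,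
      liftJ (by have := k.isLt; omega) (dTots r (k : ℕ) μ (pdQ L i μ)) z

/-- The Euler–Lagrange expressions `δL/δq^i` evaluated along a field `q`
(using `(d_μ F)[q] = ∂_μ (F[q])`). -/
def ELfield {n m : ℕ} (r : ℕ) (L : JetSpace n m r → ℝ) (q : (Fin n → ℝ) → Fin m → ℝ)
    (i : Fin m) : (Fin n → ℝ) → ℝ :=
  fun x => ∑ k ∈ Finset.range (r + 1), (-1 : ℝ) ^ k *
    ∑ μ : Fin k → Fin n, pds (List.ofFn μ) (fun y => pdQ L i μ (jetOf r q y)) x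

/-- Scaling of the jet variables: `f[tq]` is `f ∘ scaleJet t`. -/
def scaleJet {n m r : ℕ} (t : ℝ) (z : JetSpace n m r) : JetSpace n m r := (z.1, t • z.2)

/-- The Lagrangian momenta `P_i^{μ₁…μ_a}` of an order-`r` Lagrangian as jet functions. -/
def Pjet {n m r : ℕ} (L : JetSpace n m r → ℝ) (i : Fin m) {a : ℕ} (κ : Fin a → Fin n) :
    JetSpace n m (r + r) → ℝ :=
  fun z => ∑ l : Fin (r - a + 1), (-1 : ℝ) ^ (l : ℕ) *
    ∑ ν : Fin (l : ℕ) → Fin n,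
      liftJ (by have := l.isLt; omega) (dTots r (l : ℕ) ν (pdQ L i (Fin.append κ ν))) z

/-- The Lagrangian momenta `P_i^{μ₁…μ_a}` evaluated along a field `q`. -/
def PmomF {n m : ℕ} (r : ℕ) (L : JetSpace n m r → ℝ) (q : (Fin n → ℝ) → Fin m → ℝ)
    (i : Fin m) {a : ℕ} (κ : Fin a → Fin n) : (Fin n → ℝ) → ℝ :=
  fun y => ∑ l ∈ Finset.range (r - a + 1), (-1 : ℝ) ^ l *
    ∑ ν : Fin l → Fin n,
      pds (List.ofFn ν) (fun w => pdQ L i (Fin.append κ ν) (jetOf r q w)) y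

/-- The Helmholtz expressions `H_{ij}^{μ₁…μₖ}(ε)` of an order-`s` system,
as jet functions of order `2s`. -/
def Hjet {n m s : ℕ} (ε : Fin m → JetSpace n m s → ℝ) (i j : Fin m) {k : ℕ}
    (μ : Fin k → Fin n) : JetSpace n m (s + s) → ℝ :=
  fun z => liftJ (Nat.le_add_right s s) (pdQ (ε i) j μ) z
    - (-1 : ℝ) ^ k *
      ∑ l : Fin (s - k + 1), ((k + (l : ℕ)).choose k : ℝ) * (-1 : ℝ) ^ (l : ℕ) *
        ∑ ν : Fin (l : ℕ) → Fin n,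
          liftJ (by have := l.isLt; omega) (dTots s (l : ℕ) ν (pdQ (ε j) i (Fin.append μ ν))) z

/-- The Vainberg–Tonti Lagrangian `Λ(ε)[q] = ∫₀¹ ε_i[tq] q^i dt`. -/
def VTjet {n m s : ℕ} (ε : Fin m → JetSpace n m s → ℝ) : JetSpace n m s → ℝ :=
  fun z => ∫ t in (0:ℝ)..1, ∑ i : Fin m,
    ε i (scaleJet t z) * z.2 ⟨i, ⟨⟨0, Nat.succ_pos s⟩, Fin.elim0⟩⟩

open Finset

section Calculus

variable {E : Type*} [NormedAddCommGroup E] [NormedSpace ℝ E] {s : Set E} {f : E → ℝ}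

lemma ContDiffOn.fderiv_apply_of_isOpen (hf : ContDiffOn ℝ (⊤ : ℕ∞) f s) (hs : IsOpen s)
    (v : E) : ContDiffOn ℝ (⊤ : ℕ∞) (fun x => fderiv ℝ f x v) s :=
  (hf.fderiv_of_isOpen hs (by simp)).clm_apply contDiffOn_const

lemma ContDiffOn.differentiableAt_of_isOpen (hf : ContDiffOn ℝ (⊤ : ℕ∞) f s) (hs : IsOpen s)
    {x : E} (hx : x ∈ s) : DifferentiableAt ℝ f x :=
  (hf.contDiffAt (hs.mem_nhds hx)).differentiableAt (by simp)

end Calculus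

section PartialDerivatives

variable {n : ℕ} {U : Set (Fin n → ℝ)} {f g : (Fin n → ℝ) → ℝ} {x : Fin n → ℝ}

lemma ContDiffOn.pd (hf : ContDiffOn ℝ (⊤ : ℕ∞) f U) (hU : IsOpen U) (μ : Fin n) :
    ContDiffOn ℝ (⊤ : ℕ∞) (pd μ f) U :=
  hf.fderiv_apply_of_isOpen hU _

lemma ContDiffOn.pds (hf : ContDiffOn ℝ (⊤ : ℕ∞) f U) (hU : IsOpen U) (l : List (Fin n)) :
    ContDiffOn ℝ (⊤ : ℕ∞) (pds l f) U := by
  induction l with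
  | nil => exact hf
  | cons μ l ih => exact ih.pd hU μ

lemma pds_ofFn_cons {k : ℕ} (μ₀ : Fin n) (μ : Fin k → Fin n) (f : (Fin n → ℝ) → ℝ) :
    pds (List.ofFn (Fin.cons μ₀ μ : Fin (k + 1) → Fin n)) f = pd μ₀ (pds (List.ofFn μ) f) := by
  rw [List.ofFn_cons]
  rfl

lemma pd_sum {ι : Type*} (s : Finset ι) {F : ι → (Fin n → ℝ) → ℝ}
    (h : ∀ i ∈ s, DifferentiableAt ℝ (F i) x) (μ : Fin n) :
    pd μ (fun y => ∑ i ∈ s, F i y) x = ∑ i ∈ s, pd μ (F i) x := by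
  simp [pd, fderiv_fun_sum h]

lemma pd_const_mul (hf : DifferentiableAt ℝ f x) (c : ℝ) (μ : Fin n) :
    pd μ (fun y => c * f y) x = c * pd μ f x := by
  simp [pd, fderiv_const_mul hf c]

lemma pd_mul (hf : DifferentiableAt ℝ f x) (hg : DifferentiableAt ℝ g x) (μ : Fin n) :
    pd μ (fun y => f y * g y) x = pd μ f x * g x + f x * pd μ g x := by
  simp [pd, fderiv_fun_mul hf hg]
  ring

end PartialDerivatives

lemma Fintype.sum_fin_succ_pi {α : Type*} [Fintype α] {k : ℕ} (F : (Fin (k + 1) → α) → ℝ) :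
    ∑ ν : Fin (k + 1) → α, F ν = ∑ ν₀ : α, ∑ ν : Fin k → α, F (Fin.cons ν₀ ν) :=
  (Fintype.sum_equiv (Fin.consEquiv fun _ => α) _ _ fun _ => rfl).symm.trans
    (Fintype.sum_prod_type _)

section Symmetry

variable {n : ℕ}

lemma exists_perm_eq_comp_of_perm_ofFn {α : Type*} [LinearOrder α] {k : ℕ} {μ₁ μ₂ : Fin k → α}
    (h : (List.ofFn μ₁).Perm (List.ofFn μ₂)) : ∃ τ : Equiv.Perm (Fin k), μ₂ = μ₁ ∘ τ := by
  have hsort : μ₁ ∘ Tuple.sort μ₁ = μ₂ ∘ Tuple.sort μ₂ :=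
    List.ofFn_injective <| List.Perm.eq_of_sortedLE
      (Tuple.monotone_sort μ₁).sortedLE_ofFn (Tuple.monotone_sort μ₂).sortedLE_ofFn
      (((Tuple.sort μ₁).ofFn_comp_perm μ₁).trans (h.trans ((Tuple.sort μ₂).ofFn_comp_perm μ₂).symm))
  refine ⟨(Tuple.sort μ₂).symm.trans (Tuple.sort μ₁), funext fun j => ?_⟩
  simpa using (congrFun hsort ((Tuple.sort μ₂).symm j)).symm

lemma symCoeff_comp_perm {k k' : ℕ} (μ : Fin k → Fin n) (τ : Equiv.Perm (Fin k))
    (ν : Fin k' → Fin n) : symCoeff (μ ∘ τ) ν = symCoeff μ ν := by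
  unfold symCoeff
  congr 2
  refine Finset.card_nbij' (τ * ·) (τ⁻¹ * ·) ?_ ?_ (fun σ _ => by simp)
    (fun σ _ => by simp [← mul_assoc])
  · intro σ hσ
    simp only [coe_filter, Set.mem_ofPred_eq, mem_univ, true_and] at hσ ⊢
    rw [← hσ]
    rfl
  · intro σ hσ
    simp only [coe_filter, Set.mem_ofPred_eq, mem_univ, true_and] at hσ ⊢
    rw [← hσ]
    congr 1
    funext j
    simp

lemma symCoeff_congr {k₁ k₂ k' : ℕ} {μ₁ : Fin k₁ → Fin n} {μ₂ : Fin k₂ → Fin n}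
    (h : (List.ofFn μ₁).Perm (List.ofFn μ₂)) (ν : Fin k' → Fin n) :
    symCoeff μ₁ ν = symCoeff μ₂ ν := by
  obtain rfl : k₁ = k₂ := by simpa using h.length_eq
  obtain ⟨τ, rfl⟩ := exists_perm_eq_comp_of_perm_ofFn h
  exact (symCoeff_comp_perm μ₁ τ ν).symm

lemma pdQ_congr {m r : ℕ} (L : JetSpace n m r → ℝ) (i : Fin m) {k₁ k₂ : ℕ}
    {μ₁ : Fin k₁ → Fin n} {μ₂ : Fin k₂ → Fin n} (h : (List.ofFn μ₁).Perm (List.ofFn μ₂)) :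
    pdQ L i μ₁ = pdQ L i μ₂ := by
  have hdir : jetDir m r i μ₁ = jetDir m r i μ₂ := by
    funext p
    simp only [jetDir, symCoeff_congr h]
  unfold pdQ
  rw [hdir]

end Symmetry

section Momentum

variable {n : ℕ} {U : Set (Fin n → ℝ)} {G : {k : ℕ} → (Fin k → Fin n) → (Fin n → ℝ) → ℝ}

def momentum (G : {k : ℕ} → (Fin k → Fin n) → (Fin n → ℝ) → ℝ) (N : ℕ) {a : ℕ}
    (κ : Fin a → Fin n) : (Fin n → ℝ) → ℝ :=
  fun y => ∑ l ∈ range (N + 1), (-1 : ℝ) ^ l *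
    ∑ ν : Fin l → Fin n, pds (List.ofFn ν) (G (Fin.append κ ν)) y

variable (hG : ∀ {k k' : ℕ} {κ : Fin k → Fin n} {κ' : Fin k' → Fin n},
    (List.ofFn κ).Perm (List.ofFn κ') → G κ = G κ')
  (hU : IsOpen U) (hGU : ∀ {k : ℕ} (κ : Fin k → Fin n), ContDiffOn ℝ (⊤ : ℕ∞) (G κ) U)

section Symmetric

include hG

lemma momentum_zero {a : ℕ} (κ : Fin a → Fin n) : momentum G 0 κ = G κ := by
  have hκ : G (Fin.append κ (default : Fin 0 → Fin n)) = G κ :=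
    hG (by rw [List.ofFn_fin_append]; simp)
  funext y
  simp [momentum, pds, hκ]

lemma momentum_of_fin_zero (N : ℕ) (κ : Fin 0 → Fin n) :
    momentum G N κ = fun y => ∑ l ∈ range (N + 1), (-1 : ℝ) ^ l *
      ∑ ν : Fin l → Fin n, pds (List.ofFn ν) (G ν) y := by
  funext y
  refine sum_congr rfl fun l _ => congrArg _ (sum_congr rfl fun ν _ => ?_)
  have hν : G (Fin.append κ ν) = G ν :=
    hG (by rw [List.ofFn_fin_append, List.ofFn_zero, List.nil_append])
  exact congrArg (fun g => pds (List.ofFn ν) g y) hν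

end Symmetric

section Smooth

include hU hGU

lemma contDiffOn_momentum (N : ℕ) {a : ℕ} (κ : Fin a → Fin n) :
    ContDiffOn ℝ (⊤ : ℕ∞) (momentum G N κ) U :=
  ContDiffOn.sum fun _ _ => contDiffOn_const.mul <| ContDiffOn.sum fun _ _ => (hGU _).pds hU _

lemma pd_momentum {x : Fin n → ℝ} (hx : x ∈ U) (N : ℕ) {a : ℕ} (κ : Fin a → Fin n)
    (μ₀ : Fin n) :
    pd μ₀ (momentum G N κ) x = ∑ l ∈ range (N + 1), (-1 : ℝ) ^ l *
      ∑ ν : Fin l → Fin n, pds (List.ofFn (Fin.cons μ₀ ν : Fin (l + 1) → Fin n))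
        (G (Fin.append κ ν)) x := by
  have hdiff : ∀ {l : ℕ} (ν : Fin l → Fin n),
      DifferentiableAt ℝ (pds (List.ofFn ν) (G (Fin.append κ ν))) x :=
    fun ν => ((hGU _).pds hU _).differentiableAt_of_isOpen hU hx
  unfold momentum
  rw [pd_sum _ fun l _ => (DifferentiableAt.fun_sum fun ν _ => hdiff ν).const_mul _]
  refine sum_congr rfl fun l _ => ?_
  rw [pd_const_mul (DifferentiableAt.fun_sum fun ν _ => hdiff ν), pd_sum _ fun ν _ => hdiff ν]
  simp only [pds_ofFn_cons]

include hG

/-- The symmetry of `G` moves the extra index of `∂_{μ₀} P_{μ₀κ}` to the end of the multi-index,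
which turns the `l`-th term of `Σ_{μ₀} ∂_{μ₀} P_{μ₀κ}` into the `(l+1)`-th term of `P_κ`. -/
lemma momentum_succ {x : Fin n → ℝ} (hx : x ∈ U) (N : ℕ) {a : ℕ} (κ : Fin a → Fin n) :
    momentum G (N + 1) κ x
      = G κ x - ∑ μ₀ : Fin n, pd μ₀ (momentum G N (Fin.cons μ₀ κ : Fin (a + 1) → Fin n)) x := by
  set T : ℕ → ℝ := fun l => ∑ ν : Fin l → Fin n, pds (List.ofFn ν) (G (Fin.append κ ν)) x
  have hT0 : T 0 = G κ x := by simpa [T, momentum] using congrFun (momentum_zero hG κ) x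
  have hbdry : ∑ μ₀ : Fin n, pd μ₀ (momentum G N (Fin.cons μ₀ κ : Fin (a + 1) → Fin n)) x
      = ∑ l ∈ range (N + 1), (-1 : ℝ) ^ l * T (l + 1) := by
    simp only [pd_momentum hU hGU hx, T, Fintype.sum_fin_succ_pi, mul_sum]
    rw [sum_comm]
    refine sum_congr rfl fun l _ => sum_congr rfl fun μ₀ _ => sum_congr rfl fun ν _ => ?_
    have hmove : G (Fin.append (Fin.cons μ₀ κ : Fin (a + 1) → Fin n) ν)
        = G (Fin.append κ (Fin.cons μ₀ ν : Fin (l + 1) → Fin n)) :=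
      hG (κ := Fin.append (Fin.cons μ₀ κ : Fin (a + 1) → Fin n) ν) (by
        rw [List.ofFn_fin_append, List.ofFn_fin_append, List.ofFn_cons, List.ofFn_cons]
        exact List.perm_middle.symm)
    rw [hmove]
  have hsplit : momentum G (N + 1) κ x = ∑ l ∈ range (N + 2), (-1 : ℝ) ^ l * T l := rfl
  rw [hsplit, sum_range_succ', hbdry, hT0]
  simp only [pow_succ, mul_neg_one, neg_mul, sum_neg_distrib, pow_zero, one_mul]
  ring

end Smooth

end Momentum

section Telescoping

variable {n : ℕ} {ι : Type*} [Fintype ι] {P : ι → (k : ℕ) → (Fin k → Fin n) → (Fin n → ℝ) → ℝ}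
  {f : ι → (Fin n → ℝ) → ℝ} {x : Fin n → ℝ}
  (hP : ∀ i k (κ : Fin k → Fin n), DifferentiableAt ℝ (P i k κ) x)
  (hf : ∀ i (l : List (Fin n)), DifferentiableAt ℝ (pds l (f i)) x)
include hP hf

lemma sum_pd_sum_mul_pds (k : ℕ) :
    ∑ μ₀ : Fin n, pd μ₀ (fun y => ∑ μ : Fin k → Fin n, ∑ i : ι,
        P i (k + 1) (Fin.cons μ₀ μ) y * pds (List.ofFn μ) (f i) y) x
      = ∑ μ : Fin k → Fin n, ∑ i : ι,
          (∑ μ₀ : Fin n, pd μ₀ (P i (k + 1) (Fin.cons μ₀ μ)) x) * pds (List.ofFn μ) (f i) x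
        + ∑ κ : Fin (k + 1) → Fin n, ∑ i : ι, P i (k + 1) κ x * pds (List.ofFn κ) (f i) x := by
  have hleibniz : ∀ μ₀ : Fin n, pd μ₀ (fun y => ∑ μ : Fin k → Fin n, ∑ i : ι,
        P i (k + 1) (Fin.cons μ₀ μ) y * pds (List.ofFn μ) (f i) y) x
      = ∑ μ : Fin k → Fin n, ∑ i : ι,
          (pd μ₀ (P i (k + 1) (Fin.cons μ₀ μ)) x * pds (List.ofFn μ) (f i) x
            + P i (k + 1) (Fin.cons μ₀ μ) x * pds (List.ofFn (Fin.cons μ₀ μ)) (f i) x) := by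
    intro μ₀
    rw [pd_sum _ fun μ _ => DifferentiableAt.fun_sum fun i _ => (hP _ _ _).fun_mul (hf _ _)]
    refine sum_congr rfl fun μ _ => ?_
    rw [pd_sum _ fun i _ => (hP _ _ _).fun_mul (hf _ _)]
    simp only [pd_mul (hP _ _ _) (hf _ _), pds_ofFn_cons]
  simp only [hleibniz, sum_add_distrib, Fintype.sum_fin_succ_pi, sum_mul]
  congr 1
  rw [sum_comm]
  exact sum_congr rfl fun μ _ => sum_comm

theorem sum_mul_pds_eq_of_momentum_recursion (r : ℕ) (G : ι → (k : ℕ) → (Fin k → Fin n) → ℝ)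
    (hrec : ∀ i k (κ : Fin k → Fin n), k < r →
      P i k κ x = G i k κ - ∑ μ₀ : Fin n, pd μ₀ (P i (k + 1) (Fin.cons μ₀ κ)) x)
    (htop : ∀ i (κ : Fin r → Fin n), P i r κ x = G i r κ) :
    ∑ k ∈ range (r + 1), ∑ μ : Fin k → Fin n, ∑ i : ι, G i k μ * pds (List.ofFn μ) (f i) x
      = (∑ i : ι, P i 0 Fin.elim0 x * f i x)
        + ∑ μ₀ : Fin n, pd μ₀ (fun y => ∑ k ∈ range r, ∑ μ : Fin k → Fin n, ∑ i : ι,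
            P i (k + 1) (Fin.cons μ₀ μ) y * pds (List.ofFn μ) (f i) y) x := by
  set A : ℕ → ℝ := fun k => ∑ κ : Fin k → Fin n, ∑ i : ι, P i k κ x * pds (List.ofFn κ) (f i) x
  set C : ℕ → ℝ := fun k => ∑ μ : Fin k → Fin n, ∑ i : ι, G i k μ * pds (List.ofFn μ) (f i) x
  have hlevel : ∀ k ∈ range r, ∑ μ₀ : Fin n, pd μ₀ (fun y => ∑ μ : Fin k → Fin n, ∑ i : ι,
        P i (k + 1) (Fin.cons μ₀ μ) y * pds (List.ofFn μ) (f i) y) x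
      = C k + (A (k + 1) - A k) := by
    intro k hk
    have hpd : ∀ i (κ : Fin k → Fin n),
        ∑ μ₀ : Fin n, pd μ₀ (P i (k + 1) (Fin.cons μ₀ κ)) x = G i k κ - P i k κ x := by
      intro i κ
      rw [hrec i k κ (mem_range.1 hk)]
      ring
    rw [sum_pd_sum_mul_pds hP hf]
    simp only [hpd, sub_mul, sum_sub_distrib, A, C]
    ring
  have hbdry : ∑ μ₀ : Fin n, pd μ₀ (fun y => ∑ k ∈ range r, ∑ μ : Fin k → Fin n, ∑ i : ι,
        P i (k + 1) (Fin.cons μ₀ μ) y * pds (List.ofFn μ) (f i) y) x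
      = ∑ k ∈ range r, (C k + (A (k + 1) - A k)) := by
    rw [← sum_congr rfl hlevel, sum_comm]
    refine sum_congr rfl fun μ₀ _ => pd_sum _ (fun k _ => ?_) μ₀
    exact DifferentiableAt.fun_sum fun μ _ => DifferentiableAt.fun_sum fun i _ =>
      (hP _ _ _).fun_mul (hf _ _)
  have hA0 : A 0 = ∑ i : ι, P i 0 Fin.elim0 x * f i x := by
    simp only [A, Fintype.sum_unique, List.ofFn_zero, pds]
    rfl
  have hAr : A r = C r := by simp only [A, C, htop]
  rw [sum_range_succ]
  change ∑ k ∈ range r, C k + C r = _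
  rw [hbdry, sum_add_distrib, sum_range_sub, hAr, hA0]
  ring

end Telescoping

section Lagrangian

variable {n m r : ℕ} {U : Set (Fin n → ℝ)} {L : JetSpace n m r → ℝ} {q : (Fin n → ℝ) → Fin m → ℝ}

lemma ContDiffOn.jetOf (hq : ContDiffOn ℝ (⊤ : ℕ∞) q U) (hU : IsOpen U) :
    ContDiffOn ℝ (⊤ : ℕ∞) (jetOf r q) U :=
  contDiffOn_id.prodMk <| contDiffOn_pi.2 fun p => (contDiffOn_pi.1 hq p.1).pds hU _

lemma contDiffOn_pdQ_jetOf (hU : IsOpen U) (hL : ContDiffOn ℝ (⊤ : ℕ∞) L {z | z.1 ∈ U})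
    (hq : ContDiffOn ℝ (⊤ : ℕ∞) q U) (i : Fin m) {k : ℕ} (μ : Fin k → Fin n) :
    ContDiffOn ℝ (⊤ : ℕ∞) (fun y => pdQ L i μ (jetOf r q y)) U :=
  (hL.fderiv_apply_of_isOpen (hU.preimage continuous_fst) _).comp (hq.jetOf hU) fun _ hy => hy

lemma pdQ_jetOf_congr (i : Fin m) {k₁ k₂ : ℕ} {μ₁ : Fin k₁ → Fin n} {μ₂ : Fin k₂ → Fin n}
    (h : (List.ofFn μ₁).Perm (List.ofFn μ₂)) :
    (fun y => pdQ L i μ₁ (jetOf r q y)) = fun y => pdQ L i μ₂ (jetOf r q y) := by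
  rw [pdQ_congr L i h]

lemma PmomF_eq_momentum (i : Fin m) {a : ℕ} (κ : Fin a → Fin n) :
    PmomF r L q i κ = momentum (fun μ y => pdQ L i μ (jetOf r q y)) (r - a) κ :=
  rfl

lemma ELfield_eq_PmomF (i : Fin m) (κ : Fin 0 → Fin n) : ELfield r L q i = PmomF r L q i κ := by
  rw [PmomF_eq_momentum, momentum_of_fin_zero (pdQ_jetOf_congr i)]
  rfl

end Lagrangian

/-- **First variation via the Lagrangian momenta** (eq. (C.6)).
For a Lagrangian `L` of order `r` in `m` field components over an open set `U ⊆ ℝⁿ`,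
for every smooth field `q` and smooth variation `δq`, as smooth functions on `U`:
`Σ_{k=0}^{r} (∂L/∂q^i_{,μ₁…μₖ})[q] ∂_{μ₁}⋯∂_{μₖ} δq^i
  = (δL/δq^i)[q] δq^i + ∂_μ( Σ_{k=0}^{r−1} P_i^{μμ₁…μₖ}[q] ∂_{μ₁}⋯∂_{μₖ} δq^i )`,
where `P_i^{μ₁…μₖ} = Σ_{l=0}^{r−k} (−1)^l d_{ν₁}⋯d_{ν_l} ∂L/∂q^i_{,μ₁…μₖν₁…ν_l}`
are the Lagrangian momenta (total derivatives evaluated along `q`). -/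
theorem first_variation_momenta
    (n m r : ℕ) (U : Set (Fin n → ℝ)) (hU : IsOpen U)
    (L : JetSpace n m r → ℝ) (hL : ContDiffOn ℝ (⊤ : ℕ∞) L {z | z.1 ∈ U})
    (q δq : (Fin n → ℝ) → Fin m → ℝ)
    (hq : ContDiffOn ℝ (⊤ : ℕ∞) q U) (hδq : ContDiffOn ℝ (⊤ : ℕ∞) δq U) :
    ∀ x ∈ U,
      ∑ k ∈ Finset.range (r + 1), ∑ μ : Fin k → Fin n, ∑ i : Fin m,
        pdQ L i μ (jetOf r q x) * pds (List.ofFn μ) (fun y => δq y i) x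
      = (∑ i : Fin m, ELfield r L q i x * δq x i)
        + ∑ μ₀ : Fin n,
            pd μ₀
              (fun y => ∑ k ∈ Finset.range r, ∑ μ : Fin k → Fin n, ∑ i : Fin m,
                PmomF r L q i (Fin.cons μ₀ μ) y *
                  pds (List.ofFn μ) (fun w => δq w i) y) x := by
  intro x hx
  have hGU := contDiffOn_pdQ_jetOf hU hL hq
  simp only [ELfield_eq_PmomF _ (Fin.elim0 : Fin 0 → Fin n)]
  refine sum_mul_pds_eq_of_momentum_recursion (P := fun i _ κ => PmomF r L q i κ)
    (fun i _ κ => ((contDiffOn_momentum hU (hGU i) _ κ).differentiableAt_of_isOpen hU hx))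
    (fun i l => ((contDiffOn_pi.1 hδq i).pds hU l).differentiableAt_of_isOpen hU hx) r
    (fun i _ μ => pdQ L i μ (jetOf r q x)) (fun i k κ hk => ?_) (fun i κ => ?_)
  · obtain ⟨N, hN⟩ : ∃ N, r - k = N + 1 := ⟨r - k - 1, by omega⟩
    have hN' : r - (k + 1) = N := by omega
    simp only [PmomF_eq_momentum, hN, hN']
    exact momentum_succ (pdQ_jetOf_congr i) hU (hGU i) hx N κ
  · simp [PmomF_eq_momentum, momentum_zero (pdQ_jetOf_congr i)]

end
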